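/- arXiv:1409.1255 — 5 statements merged into one kernel-verified Lean document; each statement's English description precedes it below -/
import Mathlib

section
/- Let n ≥ 1 and M ∈ M_{n×n}(ℂ). Then the operator norm of the matrix exponential e^{-tM} (acting on the Euclidean space ℂⁿ) satisfies ‖e^{-tM}‖ ≤ 1 for all real t ≥ 0 if and only if Re⟨Mz, z⟩ ≥ 0 for every z ∈ ℂⁿ. -/
/-!
For a bounded operator `A` on a complex Hilbert space and a vector `z`, the function
`f s = ‖exp (-s A) z‖²` has derivative `-2 Re ⟪A w, w⟫` at `s`, where `w = exp (-s A) z`.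
If `A` is accretive, `f` is therefore antitone, so `exp (-t A)` is a contraction for `t ≥ 0`.
Conversely, if these are contractions then `f` is maximal on `[0, ∞)` at `0`, so its right
derivative `-2 Re ⟪A z, z⟫` at `0` is nonpositive. Matrices reduce to this case because
`Matrix.toEuclideanCLM` is a continuous algebra isomorphism, hence commutes with `exp`.
-/

open NormedSpace Matrix

open Set in
theorem HasDerivWithinAt.nonpos_of_isMaxOn_Ici {f : ℝ → ℝ} {f' a : ℝ}
    (hf : HasDerivWithinAt f f' (Ici a) a) (hmax : IsMaxOn f (Ici a) a) : f' ≤ 0 := by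
  have hone : (1 : ℝ) ∈ posTangentConeAt (Ici a) a :=
    mem_posTangentConeAt_of_segment_subset (by simp [segment_eq_Icc, Icc_subset_Ici_self])
  simpa using hmax.localize.hasFDerivWithinAt_nonpos hf.hasFDerivWithinAt hone

open scoped Matrix.Norms.L2Operator in
theorem Matrix.toEuclideanCLM_exp {𝕜 ι : Type*} [RCLike 𝕜] [Fintype ι] [DecidableEq ι]
    (A : Matrix ι ι 𝕜) :
    toEuclideanCLM (n := ι) (𝕜 := 𝕜) (exp A) = exp (toEuclideanCLM (n := ι) (𝕜 := 𝕜) A) := by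
  -- Any complete algebra norm would do; `map_exp` just needs one on the source.
  let : NormedAlgebra ℚ (Matrix ι ι 𝕜) := NormedAlgebra.restrictScalars ℚ 𝕜 _
  have : CompleteSpace (Matrix ι ι 𝕜) := FiniteDimensional.complete 𝕜 _
  exact map_exp (toEuclideanCLM (n := ι) (𝕜 := 𝕜)) (LinearMap.continuous_of_finiteDimensional
    (toEuclideanCLM (n := ι) (𝕜 := 𝕜)).toAlgEquiv.toLinearMap) A

section Accretive

variable {E : Type*} [NormedAddCommGroup E] [InnerProductSpace ℂ E] [CompleteSpace E]
  (A : E →L[ℂ] E)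

theorem hasDerivAt_exp_neg_smul (t : ℝ) :
    HasDerivAt (fun s : ℝ => exp (-(s : ℂ) • A)) (-A * exp (-(t : ℂ) • A)) t := by
  have hsmul : ∀ s : ℝ, s • -A = -(s : ℂ) • A := fun s => by
    rw [smul_neg, ← neg_smul, ← Complex.ofReal_neg, Complex.coe_smul]
  simpa only [hsmul] using hasDerivAt_exp_smul_const' (𝕂 := ℝ) (-A) t

theorem hasDerivAt_norm_sq_exp_neg_smul_apply (z : E) (t : ℝ) :
    HasDerivAt (fun s : ℝ => ‖exp (-(s : ℂ) • A) z‖ ^ 2)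
      (-(2 * (inner ℂ (A (exp (-(t : ℂ) • A) z)) (exp (-(t : ℂ) • A) z)).re)) t := by
  have hu : HasDerivAt (fun s : ℝ => exp (-(s : ℂ) • A) z) (-A (exp (-(t : ℂ) • A) z)) t :=
    ((ContinuousLinearMap.apply ℂ E z).restrictScalars ℝ).hasFDerivAt.comp_hasDerivAt t
      (hasDerivAt_exp_neg_smul A t)
  let : InnerProductSpace ℝ E := InnerProductSpace.rclikeToReal ℂ E
  convert hu.norm_sq using 1
  rw [real_inner_eq_re_inner ℂ, inner_neg_right, map_neg, inner_re_symm, RCLike.re_to_complex]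
  ring

theorem norm_exp_neg_smul_le_one_of_re_inner_nonneg (hA : ∀ z, 0 ≤ (inner ℂ (A z) z).re)
    {t : ℝ} (ht : 0 ≤ t) : ‖exp (-(t : ℂ) • A)‖ ≤ 1 := by
  refine ContinuousLinearMap.opNorm_le_bound _ zero_le_one fun z => ?_
  have hanti : Antitone fun s : ℝ => ‖exp (-(s : ℂ) • A) z‖ ^ 2 :=
    antitone_of_hasDerivAt_nonpos (hasDerivAt_norm_sq_exp_neg_smul_apply A z) fun _ =>
      neg_nonpos.mpr (mul_nonneg zero_le_two (hA _))
  have hsq : ‖exp (-(t : ℂ) • A) z‖ ^ 2 ≤ ‖z‖ ^ 2 := by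
    simpa using hanti ht
  rw [one_mul]
  exact (pow_le_pow_iff_left₀ (norm_nonneg _) (norm_nonneg _) two_ne_zero).mp hsq

theorem re_inner_nonneg_of_norm_exp_neg_smul_le_one
    (hA : ∀ t : ℝ, 0 ≤ t → ‖exp (-(t : ℂ) • A)‖ ≤ 1) (z : E) : 0 ≤ (inner ℂ (A z) z).re := by
  have hmax : IsMaxOn (fun s : ℝ => ‖exp (-(s : ℂ) • A) z‖ ^ 2) (Set.Ici 0) 0 := fun t ht => by
    have hle : ‖exp (-(t : ℂ) • A) z‖ ≤ ‖z‖ := by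
      simpa using (exp (-(t : ℂ) • A)).le_of_opNorm_le (hA t ht) z
    simpa using pow_le_pow_left₀ (norm_nonneg _) hle 2
  have hderiv :=
    (hasDerivAt_norm_sq_exp_neg_smul_apply A z 0).hasDerivWithinAt.nonpos_of_isMaxOn_Ici hmax
  simp only [Complex.ofReal_zero, neg_zero, zero_smul, exp_zero, one_apply_eq_self] at hderiv
  linarith

theorem norm_exp_neg_smul_le_one_iff :
    (∀ t : ℝ, 0 ≤ t → ‖exp (-(t : ℂ) • A)‖ ≤ 1) ↔ ∀ z, 0 ≤ (inner ℂ (A z) z).re :=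
  ⟨re_inner_nonneg_of_norm_exp_neg_smul_le_one A,
    fun hA _ => norm_exp_neg_smul_le_one_of_re_inner_nonneg A hA⟩

end Accretive

theorem stmt0_general (n : ℕ) (M : Matrix (Fin n) (Fin n) ℂ) :
    (∀ t : ℝ, 0 ≤ t →
        ‖Matrix.toEuclideanCLM (𝕜 := ℂ) (exp (-(t : ℂ) • M))‖ ≤ 1) ↔
    ∀ z : EuclideanSpace ℂ (Fin n),
        0 ≤ (inner ℂ (Matrix.toEuclideanLin M z) z : ℂ).re := by
  simp only [Matrix.toEuclideanCLM_exp, map_smul]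
  exact norm_exp_neg_smul_le_one_iff _

/-- For `n ≥ 1` and `M` an `n × n` complex matrix, the operator norm
(induced by the Euclidean norm on `ℂⁿ`) of `e^{-tM}` is `≤ 1` for all `t ≥ 0`
if and only if `Re⟨Mz, z⟩ ≥ 0` for every `z ∈ ℂⁿ`. -/
theorem stmt0 (n : ℕ) (hn : 1 ≤ n) (M : Matrix (Fin n) (Fin n) ℂ) :
    (∀ t : ℝ, 0 ≤ t →
        ‖Matrix.toEuclideanCLM (𝕜 := ℂ) (exp (-(t : ℂ) • M))‖ ≤ 1) ↔
    ∀ z : EuclideanSpace ℂ (Fin n),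
        0 ≤ (inner ℂ (Matrix.toEuclideanLin M z) z : ℂ).re :=
  stmt0_general n M
end

section
/- Let n ≥ 1 and let J ∈ M_{n×n}(ℂ) be in Jordan normal form: J_{jj} = λ_j for j = 1,…,n, the superdiagonal entries satisfy J_{j-1,j} = γ_j ∈ {0,1} for j = 2,…,n, all other entries of J vanish, and whenever γ_j = 1 one has λ_{j-1} = λ_j. Let D_J be the operator on ℂ[z_1,…,z_n] given by D_J p = Σ_{j,k} J_{jk} z_k ∂_{z_j} p. Then for every multi-index α ∈ ℕⁿ, setting λ_α = Σ_{j=1}^n λ_j α_j, one has (D_J − λ_α·Id)^{(n−1)|α|+1} (z^α) = 0, where z^α = z_1^{α_1}⋯z_n^{α_n} and |α| = α_1+⋯+α_n. -/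
/-! On a monomial `z^β`, the operator `D_J - λ_β` keeps only the off-diagonal terms
`J_{jk} β_j z^{β - e_j + e_k}`, and for a Jordan matrix these have `j < k` and `λ_j = λ_k`.
Such a shift preserves the degree `|β|` and the eigenvalue weight `λ_β`, and raises the index
weight `Σ i β_i` by at least one. The index weight never exceeds `(n - 1)|β|`, so
`(n - 1)|α| + 1` applications of `D_J - λ_α` kill `z^α`. -/

open MvPolynomial
open scoped BigOperators

/-- The operator `D_F p = Σ_{j,k} F_{jk} z_k ∂_{z_j} p` on `ℂ[z_1,…,z_n]`,
as a linear endomorphism. -/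
noncomputable def DOp {n : ℕ} (F : Matrix (Fin n) (Fin n) ℂ) :
    Module.End ℂ (MvPolynomial (Fin n) ℂ) :=
  ∑ j : Fin n, ∑ k : Fin n,
    F j k • (LinearMap.mulLeft ℂ (X k : MvPolynomial (Fin n) ℂ)).comp
      (pderiv j).toLinearMap

open Finsupp (weight degree single)

lemma Finsupp.weight_sub_single_add_single {σ M : Type*} [AddCommMonoid M] (w : σ → M)
    {f : σ →₀ ℕ} {i : σ} (hi : f i ≠ 0) (k : σ) :
    weight w (f - single i 1 + single k 1) + w i = weight w f + w k := by
  rw [map_add, weight_single, one_smul, add_right_comm, weight_sub_single_add hi]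

lemma Module.End.pow_apply_mem_of_le_comap {R M : Type*} [Semiring R] [AddCommMonoid M]
    [Module R M] (T : Module.End R M) {p : ℕ → Submodule R M}
    (hp : ∀ m, p m ≤ (p (m + 1)).comap T) (k : ℕ) {m : ℕ} {x : M} (hx : x ∈ p m) :
    (T ^ k) x ∈ p (m + k) := by
  induction k with
  | zero => simpa using hx
  | succ k ih => rw [pow_succ', Module.End.mul_apply, ← add_assoc]; exact hp _ ih

lemma DOp_monomial {n : ℕ} (F : Matrix (Fin n) (Fin n) ℂ) (β : Fin n →₀ ℕ) :
    DOp F (monomial β 1) =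
      ∑ j, ∑ k, (F j k * β j) • monomial (β - single j 1 + single k 1) (1 : ℂ) := by
  simp only [DOp, LinearMap.sum_apply, LinearMap.smul_apply, LinearMap.comp_apply,
    LinearMap.mulLeft_apply, Derivation.coeFn_coe, pderiv_monomial, one_mul]
  refine Finset.sum_congr rfl fun j _ => Finset.sum_congr rfl fun k _ => ?_
  rw [X, monomial_mul, one_mul, add_comm (single k 1), smul_monomial, smul_monomial, mul_smul]
  simp

lemma smul_monomial_sub_single_add_single_self {σ : Type*} (β : σ →₀ ℕ) (j : σ) (c : ℂ) :
    (c * β j) • monomial (β - single j 1 + single j 1) (1 : ℂ) = (β j • c) • monomial β 1 := by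
  rcases eq_or_ne (β j) 0 with h | h
  · simp [h]
  · rw [Finsupp.sub_add_single_one_cancel h, nsmul_eq_mul, mul_comm]

lemma Finsupp.weight_val_le_pred_mul_degree {n : ℕ} (β : Fin n →₀ ℕ) :
    weight (fun i : Fin n => (i : ℕ)) β ≤ (n - 1) * degree β := by
  rw [Finsupp.weight_eq_sum, Finsupp.degree_eq_sum, Finset.mul_sum]
  refine Finset.sum_le_sum fun i _ => ?_
  rw [smul_eq_mul, mul_comm]
  exact Nat.mul_le_mul_right _ (by omega)

def jordanLevel {n : ℕ} (lam : Fin n → ℂ) (d : ℕ) (μ : ℂ) (m : ℕ) : Set (Fin n →₀ ℕ) :=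
  {β | degree β = d ∧ weight lam β = μ ∧ m ≤ weight (fun i : Fin n => (i : ℕ)) β}

lemma jordanLevel_eq_empty {n : ℕ} (lam : Fin n → ℂ) (d : ℕ) (μ : ℂ) {m : ℕ}
    (hm : (n - 1) * d < m) : jordanLevel lam d μ m = ∅ := by
  refine Set.eq_empty_of_forall_notMem fun β ⟨hd, _, hβm⟩ => ?_
  have := Finsupp.weight_val_le_pred_mul_degree β
  subst hd
  omega

section Jordan

variable {n : ℕ} {J : Matrix (Fin n) (Fin n) ℂ} {lam : Fin n → ℂ}

lemma sub_single_add_single_mem_jordanLevel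
    (hoff : ∀ j k, j ≠ k → J j k ≠ 0 → j < k ∧ lam j = lam k)
    {d : ℕ} {μ : ℂ} {m : ℕ} {β : Fin n →₀ ℕ} (hβ : β ∈ jordanLevel lam d μ m)
    {j k : Fin n} (hjk : j ≠ k) (hJ : J j k ≠ 0) (hj : β j ≠ 0) :
    β - single j 1 + single k 1 ∈ jordanLevel lam d μ (m + 1) := by
  obtain ⟨hd, hμ, hm⟩ := hβ
  obtain ⟨hlt, hlam⟩ := hoff j k hjk hJ
  have hdeg := Finsupp.weight_sub_single_add_single (fun _ => (1 : ℕ)) hj k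
  have hidx := Finsupp.weight_sub_single_add_single (fun i : Fin n => (i : ℕ)) hj k
  have heig := Finsupp.weight_sub_single_add_single lam hj k
  rw [hlam, hμ] at heig
  rw [Fin.lt_def] at hlt
  refine ⟨?_, add_right_cancel heig, by omega⟩
  rw [Finsupp.degree_eq_weight_one] at hd ⊢
  omega

lemma DOp_sub_smul_monomial_mem_jordanLevel (hdiag : ∀ j, J j j = lam j)
    (hoff : ∀ j k, j ≠ k → J j k ≠ 0 → j < k ∧ lam j = lam k)
    {d : ℕ} {μ : ℂ} {m : ℕ} {β : Fin n →₀ ℕ} (hβ : β ∈ jordanLevel lam d μ m) :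
    (DOp J - μ • 1) (monomial β 1) ∈ restrictSupport ℂ (jordanLevel lam d μ (m + 1)) := by
  have hdiagSum : ∑ j, (J j j * β j) • monomial (β - single j 1 + single j 1) (1 : ℂ) =
      μ • monomial β 1 := by
    rw [← hβ.2.1, Finsupp.weight_eq_sum, Finset.sum_smul]
    exact Finset.sum_congr rfl fun j _ => by rw [smul_monomial_sub_single_add_single_self, hdiag]
  have hsplit : ∀ j, ∑ k, (J j k * β j) • monomial (β - single j 1 + single k 1) (1 : ℂ) =
      (J j j * β j) • monomial (β - single j 1 + single j 1) 1 +
        ∑ k ∈ Finset.univ.erase j, (J j k * β j) • monomial (β - single j 1 + single k 1) 1 :=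
    fun j => (Finset.add_sum_erase _ _ (Finset.mem_univ j)).symm
  rw [LinearMap.sub_apply, DOp_monomial, Finset.sum_congr rfl fun j _ => hsplit j,
    Finset.sum_add_distrib, hdiagSum, LinearMap.smul_apply, Module.End.one_apply,
    add_sub_cancel_left]
  refine Submodule.sum_mem _ fun j _ => Submodule.sum_mem _ fun k hk => ?_
  rw [smul_monomial, smul_eq_mul, mul_one, monomial_mem_restrictSupport, mul_eq_zero,
    Nat.cast_eq_zero]
  by_cases hJ : J j k = 0
  · exact Or.inr (Or.inl hJ)
  by_cases hj : β j = 0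
  · exact Or.inr (Or.inr hj)
  exact Or.inl
    (sub_single_add_single_mem_jordanLevel hoff hβ (Finset.ne_of_mem_erase hk).symm hJ hj)

theorem DOp_sub_smul_pow_monomial_eq_zero (hdiag : ∀ j, J j j = lam j)
    (hoff : ∀ j k, j ≠ k → J j k ≠ 0 → j < k ∧ lam j = lam k) (β : Fin n →₀ ℕ) :
    ((DOp J - weight lam β • 1) ^ ((n - 1) * degree β + 1)) (monomial β 1) = 0 := by
  have hstep : ∀ m, restrictSupport ℂ (jordanLevel lam (degree β) (weight lam β) m) ≤
      (restrictSupport ℂ (jordanLevel lam (degree β) (weight lam β) (m + 1))).comap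
        (DOp J - weight lam β • 1) := fun m => by
    rw [restrictSupport_eq_span, Submodule.span_le, Set.image_subset_iff]
    exact fun γ hγ => DOp_sub_smul_monomial_mem_jordanLevel hdiag hoff hγ
  have h := Module.End.pow_apply_mem_of_le_comap _ hstep ((n - 1) * degree β + 1) (m := 0)
    ((monomial_mem_restrictSupport ℂ (r := 1)).mpr (Or.inl ⟨rfl, rfl, Nat.zero_le _⟩))
  rwa [zero_add, jordanLevel_eq_empty _ _ _ (Nat.lt_succ_self _), mem_restrictSupport_iff,
    Set.subset_empty_iff, Finset.coe_eq_empty, support_eq_empty] at h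

end Jordan

lemma jordan_lt_and_lam_eq_of_ne_zero {n : ℕ} {J : Matrix (Fin n) (Fin n) ℂ} {lam γ : Fin n → ℂ}
    (hsup : ∀ j : Fin n, 0 < j.val →
        J ⟨j.val - 1, Nat.lt_of_le_of_lt (Nat.sub_le _ _) j.isLt⟩ j = γ j)
    (hγ : ∀ j : Fin n, γ j = 0 ∨ γ j = 1)
    (hother : ∀ i j : Fin n, i ≠ j → i.val + 1 ≠ j.val → J i j = 0)
    (hchain : ∀ j : Fin n, 0 < j.val → γ j = 1 →
        lam ⟨j.val - 1, Nat.lt_of_le_of_lt (Nat.sub_le _ _) j.isLt⟩ = lam j)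
    {j k : Fin n} (hjk : j ≠ k) (hJ : J j k ≠ 0) : j < k ∧ lam j = lam k := by
  have hadj : j.val + 1 = k.val := by_contra fun h => hJ (hother j k hjk h)
  have hk : 0 < k.val := by omega
  have hpred : (⟨k.val - 1, Nat.lt_of_le_of_lt (Nat.sub_le _ _) k.isLt⟩ : Fin n) = j :=
    Fin.ext (by simp; omega)
  have hγk : γ k = 1 := (hγ k).resolve_left fun h0 => hJ (by rw [← hpred, hsup k hk, h0])
  exact ⟨Fin.lt_def.mpr (by omega), hpred ▸ hchain k hk hγk⟩

theorem stmt13_general (n : ℕ) (J : Matrix (Fin n) (Fin n) ℂ)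
    (lam γ : Fin n → ℂ)
    (hdiag : ∀ j : Fin n, J j j = lam j)
    (hsup : ∀ j : Fin n, 0 < j.val →
        J ⟨j.val - 1, Nat.lt_of_le_of_lt (Nat.sub_le _ _) j.isLt⟩ j = γ j)
    (hγ : ∀ j : Fin n, γ j = 0 ∨ γ j = 1)
    (hother : ∀ i j : Fin n, i ≠ j → i.val + 1 ≠ j.val → J i j = 0)
    (hchain : ∀ j : Fin n, ∀ hj : 0 < j.val, γ j = 1 →
        lam ⟨j.val - 1, Nat.lt_of_le_of_lt (Nat.sub_le _ _) j.isLt⟩ = lam j)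
    (α : Fin n → ℕ) :
    ((DOp J - (∑ j, lam j * (α j : ℂ)) •
        (1 : Module.End ℂ (MvPolynomial (Fin n) ℂ)))
      ^ ((n - 1) * (∑ j, α j) + 1))
      (∏ j, (X j : MvPolynomial (Fin n) ℂ) ^ α j) = 0 := by
  set β : Fin n →₀ ℕ := Finsupp.equivFunOnFinite.symm α
  have hmon : ∏ j, (X j : MvPolynomial (Fin n) ℂ) ^ α j = monomial β 1 := by
    rw [monomial_eq, C_1, one_mul, Finsupp.prod_fintype _ _ fun _ => pow_zero _]
    rfl
  have heig : ∑ j, lam j * (α j : ℂ) = weight lam β := by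
    simp only [Finsupp.weight_eq_sum, nsmul_eq_mul, mul_comm]
    rfl
  have hdeg : ∑ j, α j = degree β := (Finsupp.degree_eq_sum β).symm
  rw [hmon, heig, hdeg]
  exact DOp_sub_smul_pow_monomial_eq_zero hdiag
    (fun _ _ => jordan_lt_and_lam_eq_of_ne_zero hsup hγ hother hchain) β

/-- if `J` is in Jordan normal form with diagonal `λ_j` and
superdiagonal entries `γ_j ∈ {0,1}` (with `λ_{j-1} = λ_j` whenever `γ_j = 1`), then
for every multi-index `α`, `(D_J - λ_α)^{(n-1)|α|+1} (z^α) = 0` where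
`λ_α = Σ_j λ_j α_j`. -/
theorem stmt13 (n : ℕ) (hn : 1 ≤ n) (J : Matrix (Fin n) (Fin n) ℂ)
    (lam γ : Fin n → ℂ)
    (hdiag : ∀ j : Fin n, J j j = lam j)
    (hsup : ∀ j : Fin n, 0 < j.val →
        J ⟨j.val - 1, Nat.lt_of_le_of_lt (Nat.sub_le _ _) j.isLt⟩ j = γ j)
    (hγ : ∀ j : Fin n, γ j = 0 ∨ γ j = 1)
    (hother : ∀ i j : Fin n, i ≠ j → i.val + 1 ≠ j.val → J i j = 0)
    (hchain : ∀ j : Fin n, ∀ hj : 0 < j.val, γ j = 1 →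
        lam ⟨j.val - 1, Nat.lt_of_le_of_lt (Nat.sub_le _ _) j.isLt⟩ = lam j)
    (α : Fin n → ℕ) :
    ((DOp J - (∑ j, lam j * (α j : ℂ)) •
        (1 : Module.End ℂ (MvPolynomial (Fin n) ℂ)))
      ^ ((n - 1) * (∑ j, α j) + 1))
      (∏ j, (X j : MvPolynomial (Fin n) ℂ) ^ α j) = 0 :=
  stmt13_general n J lam γ hdiag hsup hγ hother hchain α
end

section
/- Let n ≥ 1, M ∈ M_{n×n}(ℂ), and let G ∈ M_{n×n}(ℂ) be invertible such that J = G M G⁻¹ is in Jordan normal form with diagonal entries λ_1,…,λ_n, superdiagonal entries in {0,1}, all other entries zero, and equal consecutive diagonal entries wherever a superdiagonal entry equals 1. For α ∈ ℕⁿ define the polynomial p_α(z) = Π_{j=1}^n (Σ_{k=1}^n G_{jk} z_k)^{α_j} (i.e., p_α(z) = (Gz)^α) and λ_α = Σ_{j=1}^n λ_j α_j. Then p_α is a generalized eigenvector of the operator D_M p = Σ_{j,k} m_{jk} z_k ∂_{z_j} p with eigenvalue λ_α: (D_M − λ_α·Id)^{(n−1)|α|+1} p_α = 0. -/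
open MvPolynomial
open scoped BigOperators

/-!
`D_M` is a derivation, and for a derivation `D` the Leibniz rule reads
`(D - (a + b)) (p q) = ((D - a) p) q + p ((D - b) q)`; hence if `(D - a)^(r+1)` kills `p` and
`(D - b)^(s+1)` kills `q`, then `(D - (a + b))^(r+s+1)` kills `p q`.
On linear forms `D_M (v · z) = (v M) · z`, so `G M = J G` shows that the rows
`ℓ_j = (G z)_j` satisfy `D_M ℓ_j = λ_j ℓ_j + γ_{j+1} ℓ_{j+1}`: they form Jordan chains, and
`(D_M - λ_j)^n ℓ_j = 0`. Multiplying the `|α|` linear factors of `p_α = ∏ ℓ_j^{α_j}` gives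
the exponent `(n - 1)|α| + 1`.
-/

open Module End

namespace Derivation

variable {R A : Type*} [CommRing R] [CommRing A] [Algebra R A] (D : Derivation R A A)

lemma sub_smul_one_apply_mul (a b : R) (p q : A) :
    ((D : End R A) - (a + b) • 1) (p * q) =
      ((D : End R A) - a • 1) p * q + p * ((D : End R A) - b • 1) q := by
  simp only [LinearMap.sub_apply, LinearMap.smul_apply, one_apply, coeFn_coe, leibniz,
    smul_eq_mul]
  simp only [Algebra.smul_def, map_add]
  ring

lemma mul_mem_genEigenspace {a b : R} {p q : A} {r s : ℕ}
    (hp : p ∈ genEigenspace (D : End R A) a (r + 1 : ℕ))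
    (hq : q ∈ genEigenspace (D : End R A) b (s + 1 : ℕ)) :
    p * q ∈ genEigenspace (D : End R A) (a + b) (r + s + 1 : ℕ) := by
  suffices ∀ k r s (p q : A), r + s = k →
      p ∈ LinearMap.ker (((D : End R A) - a • 1) ^ (r + 1)) →
      q ∈ LinearMap.ker (((D : End R A) - b • 1) ^ (s + 1)) →
      p * q ∈ LinearMap.ker (((D : End R A) - (a + b) • 1) ^ (k + 1)) by
    rw [mem_genEigenspace_nat] at hp hq ⊢
    exact this _ r s p q rfl hp hq
  intro k
  induction k with
  | zero =>
    rintro r s p q hrs hp hq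
    rw [LinearMap.mem_ker] at hp hq ⊢
    obtain ⟨rfl, rfl⟩ : r = 0 ∧ s = 0 := by omega
    rw [pow_one] at hp hq ⊢
    rw [sub_smul_one_apply_mul, hp, hq, zero_mul, mul_zero, add_zero]
  | succ k ih =>
    rintro r s p q hrs hp hq
    rw [LinearMap.mem_ker] at hp hq ⊢
    rw [pow_succ, mul_apply, sub_smul_one_apply_mul, map_add]
    have h₁ : (((D : End R A) - (a + b) • 1) ^ (k + 1)) (((D : End R A) - a • 1) p * q) = 0 := by
      rcases r with _ | r
      · rw [← pow_one ((D : End R A) - a • 1), hp, zero_mul, map_zero]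
      · exact ih r s _ q (by omega) (by rwa [LinearMap.mem_ker, ← mul_apply, ← pow_succ]) hq
    have h₂ : (((D : End R A) - (a + b) • 1) ^ (k + 1)) (p * ((D : End R A) - b • 1) q) = 0 := by
      rcases s with _ | s
      · rw [← pow_one ((D : End R A) - b • 1), hq, mul_zero, map_zero]
      · exact ih r s p _ (by omega) hp (by rwa [LinearMap.mem_ker, ← mul_apply, ← pow_succ])
    rw [h₁, h₂, add_zero]

lemma pow_mem_genEigenspace {a : R} {p : A} {r : ℕ}
    (hp : p ∈ genEigenspace (D : End R A) a (r + 1 : ℕ)) (m : ℕ) :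
    p ^ m ∈ genEigenspace (D : End R A) (a * m) (r * m + 1 : ℕ) := by
  induction m with
  | zero => simp
  | succ m ih =>
    rw [pow_succ, Nat.cast_succ, mul_add_one, mul_add_one]
    exact D.mul_mem_genEigenspace ih hp

lemma prod_mem_genEigenspace {ι : Type*} (s : Finset ι) {a : ι → R} {r : ι → ℕ} {f : ι → A}
    (hf : ∀ i ∈ s, f i ∈ genEigenspace (D : End R A) (a i) (r i + 1 : ℕ)) :
    ∏ i ∈ s, f i ∈ genEigenspace (D : End R A) (∑ i ∈ s, a i) (∑ i ∈ s, r i + 1 : ℕ) := by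
  classical
  induction s using Finset.induction_on with
  | empty => simp
  | insert i s hi ih =>
    rw [Finset.prod_insert hi, Finset.sum_insert hi, Finset.sum_insert hi]
    exact D.mul_mem_genEigenspace (hf i (Finset.mem_insert_self i s))
      (ih fun j hj => hf j (Finset.mem_insert_of_mem hj))

end Derivation

lemma sum_jordan_row_smul {n : ℕ} {R V : Type*} [Semiring R] [AddCommMonoid V] [Module R V]
    {J : Matrix (Fin n) (Fin n) R} {lam γ : Fin n → R}
    (hdiag : ∀ j : Fin n, J j j = lam j)
    (hsup : ∀ j : Fin n, 0 < j.val →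
        J ⟨j.val - 1, Nat.lt_of_le_of_lt (Nat.sub_le _ _) j.isLt⟩ j = γ j)
    (hother : ∀ i j : Fin n, i ≠ j → i.val + 1 ≠ j.val → J i j = 0)
    (w : Fin n → V) (j : Fin n) :
    ∑ b, J j b • w b =
      lam j • w j + if h : j.val + 1 < n then γ ⟨j.val + 1, h⟩ • w ⟨j.val + 1, h⟩ else 0 := by
  split_ifs with h
  · have hsucc : j ≠ ⟨j.val + 1, h⟩ := Fin.ne_of_val_ne (by simp)
    rw [Fintype.sum_eq_add j _ hsucc fun b hb => by
      rw [hother j b (Ne.symm hb.1) fun h' => hb.2 (Fin.ext h'.symm), zero_smul], hdiag,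
      ← hsup ⟨j.val + 1, h⟩ (Nat.succ_pos _)]
    rfl
  · rw [Fintype.sum_eq_single j fun b hb => by
      rw [hother j b (Ne.symm hb) (by omega), zero_smul], hdiag, add_zero]

lemma mem_genEigenspace_of_jordan_chain {n : ℕ} {R V : Type*} [CommRing R] [AddCommGroup V]
    [Module R V] (f : End R V) (w : Fin n → V) (lam γ : Fin n → R)
    (hf : ∀ j : Fin n, f (w j) =
      lam j • w j + if h : j.val + 1 < n then γ ⟨j.val + 1, h⟩ • w ⟨j.val + 1, h⟩ else 0)
    (hchain : ∀ (j : Fin n) (h : j.val + 1 < n),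
      γ ⟨j.val + 1, h⟩ = 0 ∨ lam ⟨j.val + 1, h⟩ = lam j)
    (j : Fin n) :
    w j ∈ genEigenspace f (lam j) (n - j.val : ℕ) := by
  suffices ∀ m (i : Fin n), n = i.val + m + 1 → w i ∈ genEigenspace f (lam i) (m + 1 : ℕ) by
    have := this (n - j.val - 1) j (by omega)
    rwa [show n - j.val - 1 + 1 = n - j.val by omega] at this
  intro m
  induction m with
  | zero =>
    intro i hi
    rw [zero_add, Nat.cast_one, mem_genEigenspace_one, hf, dif_neg (by omega), add_zero]
  | succ m ih =>
    intro i hi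
    have h : i.val + 1 < n := by omega
    have hstep : (f - lam i • 1) (w i) = γ ⟨i.val + 1, h⟩ • w ⟨i.val + 1, h⟩ := by
      rw [LinearMap.sub_apply, hf, dif_pos h, LinearMap.smul_apply, one_apply, add_sub_cancel_left]
    rw [mem_genEigenspace_nat, LinearMap.mem_ker, pow_succ, mul_apply, hstep, map_smul]
    rcases hchain i h with hγ | hlam
    · rw [hγ, zero_smul]
    · have := ih ⟨i.val + 1, h⟩ (by simp only; omega)
      rw [mem_genEigenspace_nat, LinearMap.mem_ker, hlam] at this
      rw [this, smul_zero]

noncomputable def linForm {σ R : Type*} [Fintype σ] [CommSemiring R] :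
    (σ → R) →ₗ[R] MvPolynomial σ R where
  toFun v := ∑ k, C (v k) * X k
  map_add' v w := by simp [add_mul, Finset.sum_add_distrib]
  map_smul' c v := by simp [Finset.mul_sum, smul_eq_C_mul, mul_assoc]

lemma linForm_apply {σ R : Type*} [Fintype σ] [CommSemiring R] (v : σ → R) :
    linForm v = ∑ k, C (v k) * X k := rfl

lemma pderiv_linForm {σ R : Type*} [Fintype σ] [DecidableEq σ] [CommSemiring R] (v : σ → R)
    (i : σ) : pderiv i (linForm v) = C (v i) := by
  simp [linForm_apply, pderiv_X, Pi.single_apply]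

section DOp

variable {n : ℕ} (F : Matrix (Fin n) (Fin n) ℂ)

noncomputable def DOp.derivation :
    Derivation ℂ (MvPolynomial (Fin n) ℂ) (MvPolynomial (Fin n) ℂ) :=
  ∑ j, ∑ k, F j k • (X k : MvPolynomial (Fin n) ℂ) • pderiv j

lemma DOp.coe_derivation :
    (DOp.derivation F : End ℂ (MvPolynomial (Fin n) ℂ)) = DOp F := by
  refine LinearMap.ext fun p => ?_
  simp only [DOp.derivation, DOp, Derivation.coeFn_coe, LinearMap.sum_apply,
    ← Derivation.coeFnAddMonoidHom_apply, map_sum, Finset.sum_apply]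
  simp only [Derivation.coeFnAddMonoidHom_apply, Derivation.coe_smul, Pi.smul_apply, smul_eq_mul,
    LinearMap.smul_apply, LinearMap.coe_comp, Derivation.coeFn_coe, Function.comp_apply,
    LinearMap.mulLeft_apply]

lemma DOp_linForm (v : Fin n → ℂ) : DOp F (linForm v) = linForm (Matrix.vecMul v F) := by
  simp only [DOp, LinearMap.sum_apply, LinearMap.smul_apply, LinearMap.coe_comp,
    Function.comp_apply, LinearMap.mulLeft_apply, Derivation.coeFn_coe, pderiv_linForm]
  simp only [linForm_apply, Matrix.vecMul, dotProduct, map_sum, Finset.sum_mul, smul_eq_C_mul]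
  rw [Finset.sum_comm]
  exact Finset.sum_congr rfl fun k _ => Finset.sum_congr rfl fun j _ => by rw [map_mul]; ring

end DOp

theorem stmt15_general (n : ℕ) (M G : Matrix (Fin n) (Fin n) ℂ)
    (hG : IsUnit G.det) (J : Matrix (Fin n) (Fin n) ℂ)
    (hJ : J = G * M * G⁻¹) (lam γ : Fin n → ℂ)
    (hdiag : ∀ j : Fin n, J j j = lam j)
    (hsup : ∀ j : Fin n, 0 < j.val →
        J ⟨j.val - 1, Nat.lt_of_le_of_lt (Nat.sub_le _ _) j.isLt⟩ j = γ j)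
    (hγ : ∀ j : Fin n, γ j = 0 ∨ γ j = 1)
    (hother : ∀ i j : Fin n, i ≠ j → i.val + 1 ≠ j.val → J i j = 0)
    (hchain : ∀ j : Fin n, ∀ hj : 0 < j.val, γ j = 1 →
        lam ⟨j.val - 1, Nat.lt_of_le_of_lt (Nat.sub_le _ _) j.isLt⟩ = lam j)
    (α : Fin n → ℕ) :
    ((DOp M - (∑ j, lam j * (α j : ℂ)) •
        (1 : Module.End ℂ (MvPolynomial (Fin n) ℂ)))
      ^ ((n - 1) * (∑ j, α j) + 1))
      (∏ j, (∑ k, C (G j k) * (X k : MvPolynomial (Fin n) ℂ)) ^ α j) = 0 := by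
  have hJG : J * G = G * M := by
    rw [hJ, Matrix.mul_assoc, Matrix.nonsing_inv_mul G hG, Matrix.mul_one]
  have hrow (j : Fin n) : DOp M (linForm (G j)) = lam j • linForm (G j) +
      if h : j.val + 1 < n then γ ⟨j.val + 1, h⟩ • linForm (G ⟨j.val + 1, h⟩) else 0 := by
    rw [DOp_linForm, ← Matrix.mul_apply_eq_vecMul, ← hJG, Matrix.mul_apply_eq_vecMul,
      Matrix.vecMul_eq_sum, map_sum]
    simp only [map_smul]
    exact sum_jordan_row_smul hdiag hsup hother _ j
  have hchain_succ (j : Fin n) (h : j.val + 1 < n) :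
      γ ⟨j.val + 1, h⟩ = 0 ∨ lam ⟨j.val + 1, h⟩ = lam j :=
    (hγ _).imp_right fun h1 => (hchain _ (Nat.succ_pos _) h1).symm
  have hlin (j : Fin n) :
      linForm (G j) ∈ genEigenspace (DOp.derivation M : End ℂ _) (lam j) (n - 1 + 1 : ℕ) := by
    rw [DOp.coe_derivation]
    exact (genEigenspace _ _).monotone (by norm_cast; omega)
      (mem_genEigenspace_of_jordan_chain _ _ lam γ hrow hchain_succ j)
  have hprod := (DOp.derivation M).prod_mem_genEigenspace Finset.univ fun j _ =>
    (DOp.derivation M).pow_mem_genEigenspace (hlin j) (α j)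
  rw [DOp.coe_derivation, mem_genEigenspace_nat, LinearMap.mem_ker, ← Finset.mul_sum] at hprod
  exact hprod

/-- if `G` is invertible and `J = G M G⁻¹` is in Jordan normal form
with diagonal `λ_1, …, λ_n`, then the polynomial `p_α(z) = (Gz)^α` is a generalized
eigenvector of `D_M` with eigenvalue `λ_α = Σ_j λ_j α_j`:
`(D_M - λ_α)^{(n-1)|α|+1} p_α = 0`. -/
theorem stmt15 (n : ℕ) (hn : 1 ≤ n) (M G : Matrix (Fin n) (Fin n) ℂ)
    (hG : IsUnit G.det) (J : Matrix (Fin n) (Fin n) ℂ)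
    (hJ : J = G * M * G⁻¹) (lam γ : Fin n → ℂ)
    (hdiag : ∀ j : Fin n, J j j = lam j)
    (hsup : ∀ j : Fin n, 0 < j.val →
        J ⟨j.val - 1, Nat.lt_of_le_of_lt (Nat.sub_le _ _) j.isLt⟩ j = γ j)
    (hγ : ∀ j : Fin n, γ j = 0 ∨ γ j = 1)
    (hother : ∀ i j : Fin n, i ≠ j → i.val + 1 ≠ j.val → J i j = 0)
    (hchain : ∀ j : Fin n, ∀ hj : 0 < j.val, γ j = 1 →
        lam ⟨j.val - 1, Nat.lt_of_le_of_lt (Nat.sub_le _ _) j.isLt⟩ = lam j)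
    (α : Fin n → ℕ) :
    ((DOp M - (∑ j, lam j * (α j : ℂ)) •
        (1 : Module.End ℂ (MvPolynomial (Fin n) ℂ)))
      ^ ((n - 1) * (∑ j, α j) + 1))
      (∏ j, (∑ k, C (G j k) * (X k : MvPolynomial (Fin n) ℂ)) ^ α j) = 0 :=
  stmt15_general n M G hG J hJ lam γ hdiag hsup hγ hother hchain α
end

section
/- For a ∈ ℝ let M_a be the 2×2 complex matrix with rows (0, −a) and (a, 1). Then, as t → 0⁺ (real t > 0), the Euclidean norm of the vector e^{−tM_a}(1,0) satisfies ‖e^{−tM_a}(1,0)‖ = 1 − (a²/3) t³ + O(t⁴), i.e., the function t ↦ ‖e^{−tM_a}(1,0)‖ − 1 + (a²/3)t³ is O(t⁴) as t → 0 from the right. -/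
/-!
The vector `e^{-tM_a}(1,0)` agrees up to `O(t⁴)` with the first column `(x(t), y(t))` of the
cubic Taylor polynomial `1 - tM_a + t²M_a²/2 - t³M_a³/6`, and `x² + y²` agrees up to `O(t⁴)`
with `(1 - a²t³/3)²`. Since `1 - a²t³/3` stays near `1`, taking square roots preserves the
`O(t⁴)` error.
-/

open NormedSpace Matrix

open Asymptotics Filter Topology

theorem exp_smul_sub_partialSum_isBigO {𝕂 𝔸 : Type*} [RCLike 𝕂] [NormedRing 𝔸]
    [NormedAlgebra 𝕂 𝔸] [CompleteSpace 𝔸] (B : 𝔸) (n : ℕ) :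
    (fun t : 𝕂 => exp (t • B) - (expSeries 𝕂 𝔸).partialSum n (t • B)) =O[𝓝 0]
      fun t => t ^ n := by
  have hB : Tendsto (fun t : 𝕂 => t • B) (𝓝 0) (𝓝 0) := by
    simpa using (tendsto_id (x := 𝓝 (0 : 𝕂))).smul_const B
  have h := (exp_hasFPowerSeriesAt_zero (𝕂 := 𝕂) (𝔸 := 𝔸)).isBigO_sub_partialSum_pow n
    |>.comp_tendsto hB
  simp only [Function.comp_def, zero_add] at h
  refine h.trans (IsBigO.of_bound (‖B‖ ^ n) (.of_forall fun t => ?_))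
  simp [norm_smul, mul_pow, mul_comm]

theorem abs_sqrt_sub_le {x c : ℝ} (hx : 0 ≤ x) (hc : 0 < c) :
    |√x - c| ≤ |x - c ^ 2| / c := by
  have hdiff : x - c ^ 2 = (√x - c) * (√x + c) := by
    conv_lhs => rw [← Real.sq_sqrt hx]
    ring
  rw [le_div_iff₀ hc, hdiff, abs_mul]
  gcongr
  rw [abs_of_pos (by positivity)]
  linarith [Real.sqrt_nonneg x]

theorem Asymptotics.IsBigO.sqrt_sub {α : Type*} {l : Filter α} {N c g : α → ℝ} {c₀ : ℝ}
    (hc₀ : 0 < c₀) (hN : ∀ x, 0 ≤ N x) (hc : Tendsto c l (𝓝 c₀))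
    (h : (fun x => N x - c x ^ 2) =O[l] g) : (fun x => √(N x) - c x) =O[l] g := by
  refine IsBigO.trans (IsBigO.of_bound (2 / c₀) ?_) h
  filter_upwards [hc.eventually (eventually_ge_nhds (half_lt_self hc₀))] with x hx
  have hcx : 0 < c x := by linarith
  calc ‖√(N x) - c x‖ ≤ |N x - c x ^ 2| / c x := abs_sqrt_sub_le (hN x) hcx
    _ ≤ |N x - c x ^ 2| / (c₀ / 2) := by gcongr
    _ = 2 / c₀ * ‖N x - c x ^ 2‖ := by rw [Real.norm_eq_abs]; ring

theorem Asymptotics.IsBigO.norm_sub_norm {α E F : Type*} [SeminormedAddCommGroup E] [Norm F]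
    {l : Filter α} {f g : α → E} {k : α → F} (h : (fun x => f x - g x) =O[l] k) :
    (fun x => ‖f x‖ - ‖g x‖) =O[l] k :=
  (isBigO_of_le _ fun x => by simpa using abs_norm_sub_norm_le (f x) (g x)).trans h

noncomputable section

namespace DampedRotation

def M (a : ℝ) : Matrix (Fin 2) (Fin 2) ℂ := !![0, -(a : ℂ); (a : ℂ), 1]

def taylorFst (a t : ℝ) : ℝ := 1 - a ^ 2 * t ^ 2 / 2 + a ^ 2 * t ^ 3 / 6

def taylorSnd (a t : ℝ) : ℝ := -(a * t) + a * t ^ 2 / 2 - (a - a ^ 3) * t ^ 3 / 6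

theorem partialSum_four_mulVec (a t : ℝ) :
    (expSeries ℂ (Matrix (Fin 2) (Fin 2) ℂ)).partialSum 4 (-(t : ℂ) • M a) *ᵥ ![1, 0] =
      ![(taylorFst a t : ℂ), (taylorSnd a t : ℂ)] := by
  ext i
  fin_cases i <;>
    simp [FormalMultilinearSeries.partialSum, Finset.sum_range_succ, expSeries_apply_eq,
      Nat.factorial, mulVec, dotProduct, Fin.sum_univ_two, pow_succ, M, taylorFst, taylorSnd] <;>
    ring

theorem exp_mulVec_sub_taylor_isBigO (a : ℝ) :
    (fun t : ℝ => (EuclideanSpace.equiv (Fin 2) ℂ).symm (exp (-(t : ℂ) • M a) *ᵥ ![1, 0]) -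
        (EuclideanSpace.equiv (Fin 2) ℂ).symm ![(taylorFst a t : ℂ), (taylorSnd a t : ℂ)])
      =O[𝓝 0] fun t => t ^ 4 := by
  -- Matrices carry no global norm; any algebra norm works, here the `ℓ∞` operator norm.
  let : NormedRing (Matrix (Fin 2) (Fin 2) ℂ) := Matrix.linftyOpNormedRing
  let : NormedAlgebra ℂ (Matrix (Fin 2) (Fin 2) ℂ) := Matrix.linftyOpNormedAlgebra
  have : CompleteSpace (Matrix (Fin 2) (Fin 2) ℂ) := FiniteDimensional.complete ℂ _
  let L : Matrix (Fin 2) (Fin 2) ℂ →L[ℂ] EuclideanSpace ℂ (Fin 2) :=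
    ((EuclideanSpace.equiv (Fin 2) ℂ).symm.toLinearMap ∘ₗ
      LinearMap.applyₗ ![1, 0] ∘ₗ toLin'.toLinearMap).toContinuousLinearMap
  have hneg : Tendsto (fun t : ℝ => -(t : ℂ)) (𝓝 0) (𝓝 0) := by
    simpa using (Complex.continuous_ofReal.tendsto 0).neg
  have h := (L.isBigO_comp _ _).trans
    ((exp_smul_sub_partialSum_isBigO (M a) 4).comp_tendsto hneg)
  refine (h.congr_left fun t => ?_).trans (isBigO_of_le _ fun t => by simp)
  simp only [Function.comp_apply, ← partialSum_four_mulVec]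
  show (EuclideanSpace.equiv (Fin 2) ℂ).symm ((_ - _) *ᵥ ![1, 0]) = _
  rw [sub_mulVec, map_sub]
  rfl

theorem taylorFst_sq_add_taylorSnd_sq (a t : ℝ) :
    taylorFst a t ^ 2 + taylorSnd a t ^ 2 - (1 - a ^ 2 / 3 * t ^ 3) ^ 2 =
      t ^ 4 * ((7 * a ^ 2 - a ^ 4) / 12 - a ^ 2 / 6 * t
        + (a ^ 2 - 5 * a ^ 4 + a ^ 6) / 36 * t ^ 2) := by
  simp only [taylorFst, taylorSnd]
  ring

theorem norm_taylor_sub_isBigO (a : ℝ) :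
    (fun t : ℝ => ‖(EuclideanSpace.equiv (Fin 2) ℂ).symm
        ![(taylorFst a t : ℂ), (taylorSnd a t : ℂ)]‖ - (1 - a ^ 2 / 3 * t ^ 3))
      =O[𝓝 0] fun t => t ^ 4 := by
  have hnorm : ∀ t : ℝ, ‖(EuclideanSpace.equiv (Fin 2) ℂ).symm
      ![(taylorFst a t : ℂ), (taylorSnd a t : ℂ)]‖ = √(taylorFst a t ^ 2 + taylorSnd a t ^ 2) := by
    simp [EuclideanSpace.norm_eq, Fin.sum_univ_two]
  simp only [hnorm]
  have hc : Tendsto (fun t : ℝ => 1 - a ^ 2 / 3 * t ^ 3) (𝓝 0) (𝓝 1) := by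
    have : Continuous fun t : ℝ => 1 - a ^ 2 / 3 * t ^ 3 := by fun_prop
    simpa using this.tendsto 0
  refine IsBigO.sqrt_sub one_pos (fun t => by positivity) hc ?_
  simp only [taylorFst_sq_add_taylorSnd_sq]
  have hcont : ∀ P : ℝ → ℝ, Continuous P → (fun t => t ^ 4 * P t) =O[𝓝 0] fun t => t ^ 4 :=
    fun P hP => by simpa using (isBigO_refl _ _).mul ((hP.tendsto 0).isBigO_one ℝ)
  exact hcont _ (by fun_prop)

end DampedRotation

end

open DampedRotation

/-- for `M_a = [[0, -a], [a, 1]]`, the Euclidean norm of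
`e^{-tM_a}(1,0)` satisfies `‖e^{-tM_a}(1,0)‖ = 1 - (a²/3) t³ + O(t⁴)` as `t → 0⁺`. -/
theorem stmt18 (a : ℝ) :
    (fun t : ℝ =>
        ‖(EuclideanSpace.equiv (Fin 2) ℂ).symm
            ((exp (-(t : ℂ) • !![(0 : ℂ), -(a : ℂ); (a : ℂ), 1])).mulVec
              ![1, 0])‖
          - 1 + (a ^ 2 / 3) * t ^ 3)
      =O[nhdsWithin 0 (Set.Ioi 0)] fun t : ℝ => t ^ 4 := by
  have h := (exp_mulVec_sub_taylor_isBigO a).norm_sub_norm.add (norm_taylor_sub_isBigO a)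
  refine (h.mono nhdsWithin_le_nhds).congr_left fun t => ?_
  simp only [M]
  ring
end

section
/- For a ∈ ℝ and b > 0, let M̃_{a,b} be the 2×2 complex matrix with rows (−b, −a) and (a, 1). Then every eigenvalue λ of M̃_{a,b} satisfies Re λ > 0 if and only if b < min(a², 1). -/
/-!
The eigenvalues of `M̃_{a,b}` are the roots of `λ² - (1 - b) λ + (a² - b)`, a monic quadratic
with real coefficients. Such a quadratic `λ² - p λ + q` has both roots in the open right
half-plane iff `p > 0` and `q > 0`: the roots sum to `p` and multiply to `q`, which is `|z|²`
for a non-real conjugate pair and a product of two positive reals otherwise.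
-/

open Matrix

theorem Matrix.mem_spectrum_fin_two_iff {K : Type*} [Field K] (A : Matrix (Fin 2) (Fin 2) K)
    (r : K) : r ∈ spectrum K A ↔ r ^ 2 - A.trace * r + A.det = 0 := by
  simp [mem_spectrum_iff_isRoot_charpoly, charpoly_fin_two]

namespace Complex

theorem exists_sq_sub_mul_add_eq_zero (p q : ℂ) : ∃ z : ℂ, z ^ 2 - p * z + q = 0 := by
  obtain ⟨z, hz⟩ := exists_quadratic_eq_zero (b := -p) (c := q) one_ne_zero
    (IsAlgClosed.exists_eq_mul_self _)
  exact ⟨z, by linear_combination hz⟩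

theorem re_im_of_sq_sub_mul_add_eq_zero {p q : ℝ} {z : ℂ} (hz : z ^ 2 - p * z + q = 0) :
    z.re ^ 2 - z.im ^ 2 - p * z.re + q = 0 ∧ z.im * (2 * z.re - p) = 0 := by
  have hre := congrArg re hz
  have him := congrArg im hz
  simp only [sq, add_re, sub_re, mul_re, ofReal_re, ofReal_im, zero_re, add_im, sub_im, mul_im,
    zero_im] at hre him
  constructor <;> linarith

theorem re_pos_of_sq_sub_mul_add_eq_zero {p q : ℝ} (hp : 0 < p) (hq : 0 < q) {z : ℂ}
    (hz : z ^ 2 - p * z + q = 0) : 0 < z.re := by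
  obtain ⟨hre, him⟩ := re_im_of_sq_sub_mul_add_eq_zero hz
  rcases mul_eq_zero.1 him with hy | hy
  · by_contra! hx
    rw [hy] at hre
    nlinarith [mul_nonneg_of_nonpos_of_nonpos hx hx]
  · linarith

theorem forall_sq_sub_mul_add_eq_zero_re_pos_iff (p q : ℝ) :
    (∀ z : ℂ, z ^ 2 - p * z + q = 0 → 0 < z.re) ↔ 0 < p ∧ 0 < q := by
  refine ⟨fun h => ?_, fun ⟨hp, hq⟩ z hz => re_pos_of_sq_sub_mul_add_eq_zero hp hq hz⟩
  obtain ⟨z, hz⟩ := exists_sq_sub_mul_add_eq_zero p q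
  have hz' : (p - z) ^ 2 - p * (p - z) + q = 0 := by linear_combination hz
  have hx := h z hz
  have hx' : 0 < p - z.re := by simpa using h _ hz'
  obtain ⟨hre, him⟩ := re_im_of_sq_sub_mul_add_eq_zero hz
  refine ⟨by linarith, ?_⟩
  rcases mul_eq_zero.1 him with hy | hy
  · rw [hy] at hre
    nlinarith [mul_pos hx hx']
  · nlinarith [sq_nonneg z.im]

end Complex

theorem stmt19_general (a b : ℝ) :
    (∀ lam ∈ spectrum ℂ (!![(-b : ℂ), -(a : ℂ); (a : ℂ), 1]), 0 < lam.re)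
      ↔ b < min (a ^ 2) 1 := by
  have hchar : ∀ lam : ℂ, lam ∈ spectrum ℂ !![(-b : ℂ), -(a : ℂ); (a : ℂ), 1] ↔
      lam ^ 2 - ((1 - b : ℝ) : ℂ) * lam + ((a ^ 2 - b : ℝ) : ℂ) = 0 := by
    intro lam
    rw [mem_spectrum_fin_two_iff, trace_fin_two_of, det_fin_two_of]
    push_cast
    ring_nf
  simp only [hchar, Complex.forall_sq_sub_mul_add_eq_zero_re_pos_iff, sub_pos, lt_min_iff]
  exact and_comm

/-- for `a ∈ ℝ`, `b > 0`, and `M̃_{a,b} = [[-b, -a], [a, 1]]`, every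
eigenvalue of `M̃_{a,b}` has positive real part if and only if `b < min(a², 1)`. -/
theorem stmt19 (a b : ℝ) (hb : 0 < b) :
    (∀ lam ∈ spectrum ℂ (!![(-b : ℂ), -(a : ℂ); (a : ℂ), 1]), 0 < lam.re)
      ↔ b < min (a ^ 2) 1 :=
  stmt19_general a b
end
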